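/- The wheel with five spokes W5 (a 5-cycle plus a central vertex adjacent to all five cycle vertices) is internally 5-edge-connected, planar, not 3-regular, and contains no immersion of K_{3,3}. -/

import Mathlib

/-- A finite multigraph without loops: vertices `V`, edges `E`,
each edge has an unordered pair of distinct endpoints. -/
structure Multigraph where
  V : Type
  E : Type
  [fV : Fintype V]
  [fE : Fintype E]
  [dV : DecidableEq V]
  [dE : DecidableEq E]
  ends : E → Sym2 V
  noLoop : ∀ e, ¬ (ends e).IsDiag

attribute [instance] Multigraph.fV Multigraph.fE Multigraph.dV Multigraph.dE

namespace Multigraph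

/-- Walks in a multigraph. -/
inductive Walk (G : Multigraph) : G.V → G.V → Type
  | nil (v : G.V) : Walk G v v
  | cons {u v w : G.V} (e : G.E) (h : G.ends e = s(u, v)) (p : Walk G v w) : Walk G u w

/-- The list of edges traversed by a walk. -/
def Walk.edges {G : Multigraph} : {u v : G.V} → G.Walk u v → List G.E
  | _, _, .nil _ => []
  | _, _, .cons e _ p => e :: p.edges

/-- The list of vertices visited by a walk. -/
def Walk.support {G : Multigraph} : {u v : G.V} → G.Walk u v → List G.V
  | u, _, .nil _ => [u]
  | u, _, .cons _ _ p => u :: p.support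

/-- A walk is a path if it visits no vertex twice. -/
def Walk.IsPath {G : Multigraph} {u v : G.V} (p : G.Walk u v) : Prop := p.support.Nodup

/-- Data of an immersion of `H` into `G`: an injective map on vertices and,
for each edge of `H`, a path in `G` joining the images of its endpoints,
the paths being pairwise edge-disjoint. -/
structure ImmersionData (H G : Multigraph) where
  vmap : H.V → G.V
  inj : Function.Injective vmap
  pstart : H.E → G.V
  pend : H.E → G.V
  walk : ∀ e, G.Walk (pstart e) (pend e)
  ends_eq : ∀ e, s(pstart e, pend e) = (H.ends e).map vmap
  isPath : ∀ e, (walk e).IsPath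
  edgeDisj : ∀ e e', e ≠ e' → List.Disjoint (walk e).edges (walk e').edges

/-- `H` immerses in `G`. -/
def Immerses (H G : Multigraph) : Prop := Nonempty (ImmersionData H G)

/-- Data witnessing that `G` contains a subdivision of `H` as a subgraph
(i.e. `H` is a topological minor of `G`): as an immersion, but moreover the
paths may only meet at images of common endpoints. -/
structure SubdivisionData (H G : Multigraph) extends ImmersionData H G where
  vtxDisj : ∀ e e', e ≠ e' → ∀ x, x ∈ (walk e).support → x ∈ (walk e').support →
    ∃ w, x = vmap w ∧ w ∈ H.ends e ∧ w ∈ H.ends e'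

/-- `G` contains a subdivision of `H` as a subgraph. -/
def ContainsSubdivision (H G : Multigraph) : Prop := Nonempty (SubdivisionData H G)

/-- The complete bipartite graph `K_{3,3}`. -/
def K33 : Multigraph where
  V := Fin 3 ⊕ Fin 3
  E := Fin 3 × Fin 3
  ends e := s(Sum.inl e.1, Sum.inr e.2)
  noLoop e := by simp [Sym2.mk_isDiag_iff]

/-- The complete graph `K_5`. -/
def K5 : Multigraph where
  V := Fin 5
  E := {p : Fin 5 × Fin 5 // p.1 < p.2}
  ends e := s(e.1.1, e.1.2)
  noLoop e := by simpa [Sym2.mk_isDiag_iff] using e.2.ne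

variable (G : Multigraph)

/-- The degree of a vertex: the number of incident edges. -/
def deg (v : G.V) : ℕ := (Finset.univ.filter fun e => v ∈ G.ends e).card

/-- The multiplicity of the (possible) edge between `u` and `v`. -/
def mult (u v : G.V) : ℕ := (Finset.univ.filter fun e => G.ends e = s(u, v)).card

/-- The edge cut determined by a set `A` of vertices. -/
def cut (A : Finset G.V) : Finset G.E :=
  Finset.univ.filter fun e => ∃ u ∈ A, ∃ v ∈ Aᶜ, G.ends e = s(u, v)

/-- Every edge cut of `G` has at least `k` edges. -/
def EdgeConnGe (k : ℕ) : Prop :=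
  ∀ A : Finset G.V, A.Nonempty → A ≠ Finset.univ → k ≤ (G.cut A).card

/-- Internally 4-edge-connected: 3-edge-connected and every 3-edge cut has a
side consisting of a single vertex. -/
def Internally4EC : Prop :=
  G.EdgeConnGe 3 ∧ ∀ A : Finset G.V, A.Nonempty → A ≠ Finset.univ →
    (G.cut A).card = 3 → A.card = 1 ∨ Aᶜ.card = 1

/-- Weakly 5-edge-connected: internally 4-edge-connected and every 4-edge cut
has a side with at most two vertices. -/
def Weakly5EC : Prop :=
  G.Internally4EC ∧ ∀ A : Finset G.V, A.Nonempty → A ≠ Finset.univ →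
    (G.cut A).card = 4 → A.card ≤ 2 ∨ Aᶜ.card ≤ 2

/-- `G` is `d`-regular. -/
def IsRegular (d : ℕ) : Prop := ∀ v, G.deg v = d

/-- `G` is connected. -/
def Connected : Prop := ∀ u v : G.V, Nonempty (G.Walk u v)

/-- `v` is a cut-vertex: the remaining vertices split into two nonempty parts
with no edge between them. -/
def IsCutVertex (v : G.V) : Prop :=
  ∃ C D : Finset G.V, C.Nonempty ∧ D.Nonempty ∧ Disjoint C D ∧ v ∉ C ∧ v ∉ D ∧
    (∀ x : G.V, x ∈ C ∪ D ∨ x = v) ∧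
    ∀ e : G.E, ¬ ∃ u ∈ C, ∃ w ∈ D, G.ends e = s(u, w)

/-- `G` is 2-connected. -/
def TwoConnected : Prop :=
  G.Connected ∧ 3 ≤ Fintype.card G.V ∧ ∀ v, ¬ G.IsCutVertex v

/-- Planarity, via Kuratowski's characterization: no subdivision of `K_5`
nor of `K_{3,3}` as a subgraph. -/
def Planar : Prop := ¬ ContainsSubdivision K5 G ∧ ¬ ContainsSubdivision K33 G

end Multigraph

namespace Multigraph

/-- The wheel with five spokes: a 5-cycle together with a central vertex
(`none`) adjacent to all five cycle vertices. -/
def W5 : Multigraph where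
  V := Option (Fin 5)
  E := Fin 5 ⊕ Fin 5
  ends e := match e with
    | .inl i => s(some i, some (i + 1))
    | .inr i => s(none, some i)
  noLoop e := match e with
    | .inl i => by
        simp only [Sym2.mk_isDiag_iff, Option.some.injEq]
        intro h
        exact absurd (congrArg Fin.val h) (by fin_cases i <;> decide)
    | .inr i => by simp [Sym2.mk_isDiag_iff]

end Multigraph

/-!
In an immersion of `H` into `G` every path has at least one edge and the paths are
edge-disjoint, so at most `|E(G)| - |E(H)|` paths have more than one edge. A path that is a
single edge carries an edge of a cut of `H` to an edge of the image cut in `G`; hence the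
image of a cut of `H` loses at most `|E(G)| - |E(H)|` of its edges.

`W5` has 10 edges. `K_{3,3}` has 9 edges and a cut of size 9, while every cut of `W5` has at
most 7 edges: the odd rim meets a cut in at most 4 edges, and in 4 only when the rim is split
into parts of sizes 2 and 3. `K_5` has 10 edges and every vertex of it spans a cut of size 4,
while some vertex must go to a rim vertex, whose cut has size 3. Planarity follows since a
subdivision is an immersion; the connectivity and degree conditions are finite checks.
-/

namespace Multigraph

variable {G : Multigraph}

namespace Walk

lemma start_mem_support {u v : G.V} (p : G.Walk u v) : u ∈ p.support := by
  cases p <;> simp [Walk.support]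

lemma mem_support_of_mem_edges {u v : G.V} (p : G.Walk u v) {g : G.E} (hg : g ∈ p.edges)
    {x : G.V} (hx : x ∈ G.ends g) : x ∈ p.support := by
  induction p with
  | nil => simp [Walk.edges] at hg
  | cons e h p ih =>
    simp only [Walk.edges, List.mem_cons] at hg
    rcases hg with rfl | hg
    · rw [h, Sym2.mem_iff] at hx
      rcases hx with rfl | rfl
      · simp [Walk.support]
      · simp [Walk.support, p.start_mem_support]
    · simp [Walk.support, ih hg]

lemma IsPath.edges_nodup {u v : G.V} {p : G.Walk u v} (hp : p.IsPath) : p.edges.Nodup := by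
  induction p with
  | nil => simp [Walk.edges]
  | cons e h p ih =>
    obtain ⟨hu, hp⟩ := List.nodup_cons.mp hp
    refine List.nodup_cons.mpr ⟨fun he => hu ?_, ih hp⟩
    exact p.mem_support_of_mem_edges he (h ▸ Sym2.mem_mk_left _ _)

lemma edges_ne_nil {u v : G.V} (p : G.Walk u v) (huv : u ≠ v) : p.edges ≠ [] := by
  cases p with
  | nil => exact absurd rfl huv
  | cons => simp [Walk.edges]

lemma ends_eq_of_edges_eq_singleton {u v : G.V} (p : G.Walk u v) {g : G.E}
    (hp : p.edges = [g]) : G.ends g = s(u, v) := by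
  cases p with
  | nil => simp [Walk.edges] at hp
  | cons e h q =>
    cases q with
    | nil =>
      obtain rfl : e = g := by simpa [Walk.edges] using hp
      exact h
    | cons => simp [Walk.edges] at hp

end Walk

namespace ImmersionData

variable {H : Multigraph} (D : ImmersionData H G)

lemma pstart_ne_pend (e : H.E) : D.pstart e ≠ D.pend e := fun h =>
  H.noLoop e <| (Sym2.isDiag_map D.inj).mp <| D.ends_eq e ▸ h ▸ Sym2.mk_isDiag_iff.mpr rfl

lemma card_biUnion_edges (s : Finset H.E) :
    (s.biUnion fun e => (D.walk e).edges.toFinset).card =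
      ∑ e ∈ s, (D.walk e).edges.length := by
  rw [Finset.card_biUnion]
  · exact Finset.sum_congr rfl fun e _ => List.toFinset_card_of_nodup (D.isPath e).edges_nodup
  · intro e _ e' _ hne
    simpa [Function.onFun, List.disjoint_toFinset_iff_disjoint] using D.edgeDisj e e' hne

lemma mem_cut_image_of_edges_eq_singleton {A : Finset H.V} {e : H.E} (he : e ∈ H.cut A)
    {g : G.E} (hg : (D.walk e).edges = [g]) : g ∈ G.cut (A.image D.vmap) := by
  obtain ⟨u, hu, v, hv, huv⟩ := (Finset.mem_filter.mp he).2
  have hends : G.ends g = s(D.vmap u, D.vmap v) := by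
    rw [(D.walk e).ends_eq_of_edges_eq_singleton hg, D.ends_eq, huv, Sym2.map_mk]
  refine Finset.mem_filter.mpr ⟨Finset.mem_univ _, D.vmap u, Finset.mem_image_of_mem _ hu,
    D.vmap v, ?_, hends⟩
  rw [Finset.mem_compl, Finset.mem_image]
  rintro ⟨w, hw, hwv⟩
  exact Finset.mem_compl.mp hv (D.inj hwv ▸ hw)

theorem card_cut_add_card_le (A : Finset H.V) :
    (H.cut A).card + Fintype.card H.E ≤ (G.cut (A.image D.vmap)).card + Fintype.card G.E := by
  set len : H.E → ℕ := fun e => (D.walk e).edges.length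
  set T := (H.cut A).filter fun e => len e = 1
  have hlen_pos : ∀ e, 1 ≤ len e := fun e =>
    List.length_pos_iff.mpr ((D.walk e).edges_ne_nil (D.pstart_ne_pend e))
  have hsum_len : ∑ e, len e ≤ Fintype.card G.E :=
    D.card_biUnion_edges Finset.univ ▸ Finset.card_le_univ _
  have hT : T.card ≤ (G.cut (A.image D.vmap)).card := by
    have hsub : (T.biUnion fun e => (D.walk e).edges.toFinset) ⊆ G.cut (A.image D.vmap) := by
      intro g hg
      obtain ⟨e, heT, hge⟩ := Finset.mem_biUnion.mp hg
      obtain ⟨hecut, he1⟩ := Finset.mem_filter.mp heT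
      obtain ⟨g', hg'⟩ := List.length_eq_one_iff.mp he1
      rw [hg', List.toFinset_cons, List.toFinset_nil, insert_empty_eq,
        Finset.mem_singleton] at hge
      exact hge ▸ D.mem_cut_image_of_edges_eq_singleton hecut hg'
    calc T.card = ∑ e ∈ T, len e := by
          rw [Finset.card_eq_sum_ones]
          exact Finset.sum_congr rfl fun e he => (Finset.mem_filter.mp he).2.symm
      _ = _ := (D.card_biUnion_edges T).symm
      _ ≤ _ := Finset.card_le_card hsub
  -- a cut edge of `H` whose path is not a single edge uses at least one surplus edge of `G`
  have hpointwise (e : H.E) :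
      (if e ∈ H.cut A then 1 else 0) + 1 ≤ len e + if e ∈ T then 1 else 0 := by
    have := hlen_pos e
    split_ifs <;> grind
  have := Finset.sum_le_sum fun e (_ : e ∈ Finset.univ) => hpointwise e
  simp only [Finset.sum_add_distrib, Finset.sum_boole, Finset.filter_mem_eq_inter,
    Finset.univ_inter, Nat.cast_id, Finset.sum_const, Finset.card_univ, smul_eq_mul,
    mul_one] at this
  omega

end ImmersionData

lemma ContainsSubdivision.immerses {H : Multigraph} (h : ContainsSubdivision H G) :
    Immerses H G :=
  h.elim fun S => ⟨S.toImmersionData⟩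

lemma W5_card_cut_le_seven (A : Finset W5.V) : (W5.cut A).card ≤ 7 := by
  revert A
  decide

lemma K5_card_cut_singleton (w : K5.V) : (K5.cut {w}).card = 4 := by
  revert w
  decide

lemma W5_card_cut_singleton_of_ne_none (v : W5.V) (hv : v ≠ none) : (W5.cut {v}).card = 3 := by
  obtain - | j := v
  · exact absurd rfl hv
  · clear hv
    revert j
    decide

lemma not_immerses_K33_W5 : ¬ Immerses K33 W5 := by
  rintro ⟨D⟩
  let A : Finset K33.V := Finset.univ.image Sum.inl
  have hK33 : (K33.cut A).card = 9 := by decide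
  have h := (D.card_cut_add_card_le A).trans (Nat.add_le_add_right (W5_card_cut_le_seven _) _)
  rw [hK33] at h
  exact absurd h (by decide)

lemma not_immerses_K5_W5 : ¬ Immerses K5 W5 := by
  rintro ⟨D⟩
  obtain ⟨w, hw⟩ : ∃ w, D.vmap w ≠ none := by
    by_contra! hnone
    exact absurd (D.inj ((hnone (0 : Fin 5)).trans (hnone (1 : Fin 5)).symm))
      (by decide : (0 : Fin 5) ≠ 1)
  have h := D.card_cut_add_card_le {w}
  rw [Finset.image_singleton, K5_card_cut_singleton,
    W5_card_cut_singleton_of_ne_none _ hw] at h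
  exact absurd h (by decide)

lemma W5_planar : W5.Planar :=
  ⟨fun h => not_immerses_K5_W5 h.immerses, fun h => not_immerses_K33_W5 h.immerses⟩

end Multigraph

open Multigraph in
/-- The wheel with five spokes is weakly 5-edge-connected (in particular
internally 4-edge-connected), planar, not 3-regular, and contains no immersion
of `K_{3,3}`. -/
theorem W5_properties :
    W5.Weakly5EC ∧ W5.Planar ∧ ¬ W5.IsRegular 3 ∧ ¬ Immerses K33 W5 := by
  refine ⟨⟨⟨?_, by decide⟩, by decide⟩, W5_planar, fun h => absurd (h none) (by decide),
    not_immerses_K33_W5⟩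
  unfold EdgeConnGe
  decide
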